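/- For all x, y with 0 < x ≤ 1/2 and 0 < y ≤ min(2x, 1−x), one has K_μ(x, y) ≥ L_μ(x, y) ≥ 0. -/

import Mathlib

open MeasureTheory Set Filter Topology
open scoped ENNReal

/-- The measure on `ℝ` with density `f` with respect to Lebesgue measure. -/
noncomputable def densMeasure (f : ℝ → ℝ) : Measure ℝ :=
  MeasureTheory.volume.withDensity (fun x => ENNReal.ofReal (f x))

/-- The essential boundary of a set `Ω ⊆ ℝ`: points whose Lebesgue density in `Ω`
is neither `0` nor `1`. -/
def essBoundary (Ω : Set ℝ) : Set ℝ :=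
  {x : ℝ |
    ¬ Tendsto (fun ρ : ℝ => (MeasureTheory.volume (Ω ∩ Ioo (x - ρ) (x + ρ))).toReal / (2 * ρ))
        (nhdsWithin 0 (Ioi 0)) (nhds 0) ∧
    ¬ Tendsto (fun ρ : ℝ => (MeasureTheory.volume (Ω ∩ Ioo (x - ρ) (x + ρ))).toReal / (2 * ρ))
        (nhdsWithin 0 (Ioi 0)) (nhds 1)}

/-- The `μ`-perimeter of `Ω`: the integral of the density `f` over the essential boundary
of `Ω` with respect to the 0-dimensional Hausdorff (counting) measure. -/
noncomputable def perim (f : ℝ → ℝ) (Ω : Set ℝ) : ℝ≥0∞ :=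
  ∫⁻ x in essBoundary Ω, ENNReal.ofReal (f x) ∂Measure.count

/-- The setup of the paper: an even, log-concave probability density `f` on `ℝ`,
positive exactly on the symmetric interval `(-b₀, b₀)` (with `b₀ ∈ (0, ∞]`),
together with the inverse `Finv` of the cumulative distribution function on `(0,1)`
and the isoperimetric function `J` given by `J r = f (Finv r)` on `(0,1)`,
`J 0 = J 1 = 0`. -/
structure LogConcaveSetup where
  f : ℝ → ℝ
  b₀ : ℝ≥0∞
  hb₀ : 0 < b₀
  hf_meas : Measurable f
  hf_pos : ∀ x : ℝ, 0 < f x ↔ ENNReal.ofReal |x| < b₀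
  hf_even : ∀ x : ℝ, f (-x) = f x
  hf_logConcave : ConcaveOn ℝ {x : ℝ | 0 < f x} (fun x => Real.log (f x))
  hprob : IsProbabilityMeasure (densMeasure f)
  Finv : ℝ → ℝ
  hFinv : ∀ r ∈ Ioo (0:ℝ) 1, (densMeasure f (Iic (Finv r))).toReal = r
  J : ℝ → ℝ
  hJ : ∀ r ∈ Ioo (0:ℝ) 1, J r = f (Finv r)
  hJ0 : J 0 = 0
  hJ1 : J 1 = 0

/-- The asymmetry `λ(Ω)`: the minimum of the `μ`-measures of the symmetric differences
of `Ω` with the two half-lines of the same `μ`-measure as `Ω`. -/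
noncomputable def asym (S : LogConcaveSetup) (Ω : Set ℝ) : ℝ :=
  min ((densMeasure S.f (symmDiff Ω (Iio (S.Finv ((densMeasure S.f Ω).toReal))))).toReal)
      ((densMeasure S.f (symmDiff Ω (Ioi (S.Finv (1 - (densMeasure S.f Ω).toReal))))).toReal)

/-- The isoperimetric deficit function `K_μ`. -/
noncomputable def Kfun (J : ℝ → ℝ) (x y : ℝ) : ℝ :=
  if y ≤ x then J (x - y / 2) - J x + J (y / 2) else J (x + y / 2) - J x + J (y / 2)

/-- The convenient lower bound `L_μ` on the isoperimetric deficit function. -/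
noncomputable def Lfun (J : ℝ → ℝ) (x y : ℝ) : ℝ :=
  if y ≤ x then J (y / 2) - (y / (2 * x)) * J x else J (y / 2) - (y / (2 * (1 - x))) * J x

/-!
Log-concavity of `f` gives `f t * f b ≤ f a * f (t + b - a)` for `t ≤ a ≤ b`. Integrating in `t`
over `(-∞, a]`, resp. (with the points relabelled) over `(b, ∞)`, shows that `F / f` is nondecreasing and
`(1 - F) / f` nonincreasing on the support; composed with `F⁻¹` this says that `J r / r` is
nonincreasing and `J r / (1 - r)` nondecreasing on `(0, 1)`. Each of the inequalities
`L ≤ K` and `0 ≤ L` compares `J` at `x` with `J` at `x ∓ y / 2` or `y / 2` through one of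
these two monotone ratios; for `0 ≤ L` when `y > x` one also uses `x ≤ 1 - x` or `y / 2 ≤ 1 - y / 2`.
-/

theorem ConcaveOn.map_add_map_le_of_le_of_le {s : Set ℝ} {φ : ℝ → ℝ} (hφ : ConcaveOn ℝ s φ)
    {t a b : ℝ} (ht : t ∈ s) (hb : b ∈ s) (hta : t ≤ a) (hab : a ≤ b) :
    φ t + φ b ≤ φ a + φ (t + b - a) := by
  rcases (hta.trans hab).eq_or_lt with htb | htb
  · obtain rfl : t = a := le_antisymm hta (htb ▸ hab)
    rw [← htb, add_sub_cancel_right]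
  -- `a` and `t + b - a` are the convex combinations of `t, b` with swapped weights `θ, 1 - θ`.
  set θ := (b - a) / (b - t)
  have hθ₀ : 0 ≤ θ := div_nonneg (by linarith) (by linarith)
  have hθ₁ : θ ≤ 1 := (div_le_one (by linarith)).2 (by linarith)
  have ha : θ • t + (1 - θ) • b = a := by
    simp only [θ, smul_eq_mul]; field_simp; ring
  have hm : (1 - θ) • t + θ • b = t + b - a := by
    simp only [θ, smul_eq_mul]; field_simp; ring
  have h₁ := hφ.2 ht hb hθ₀ (sub_nonneg.2 hθ₁) (add_sub_cancel θ 1)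
  have h₂ := hφ.2 ht hb (sub_nonneg.2 hθ₁) hθ₀ (sub_add_cancel 1 θ)
  rw [ha] at h₁
  rw [hm] at h₂
  simp only [smul_eq_mul] at h₁ h₂
  linarith

theorem mul_le_mul_of_concaveOn_log {g : ℝ → ℝ}
    (hg : ConcaveOn ℝ {x | 0 < g x} fun x => Real.log (g x))
    {t a b : ℝ} (ht : 0 < g t) (hb : 0 < g b) (hta : t ≤ a) (hab : a ≤ b) :
    g t * g b ≤ g a * g (t + b - a) := by
  have ha : 0 < g a := hg.1.ordConnected.out ht hb ⟨hta, hab⟩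
  have hm : 0 < g (t + b - a) :=
    hg.1.ordConnected.out ht hb ⟨by linarith, by linarith⟩
  rw [← Real.log_le_log_iff (by positivity) (by positivity), Real.log_mul ht.ne' hb.ne',
    Real.log_mul ha.ne' hm.ne']
  exact hg.map_add_map_le_of_le_of_le ht hb hta hab

theorem densMeasure_eq_zero_of_nonpos {f : ℝ → ℝ} {s : Set ℝ} (hs : MeasurableSet s)
    (hf : ∀ x ∈ s, f x ≤ 0) : densMeasure f s = 0 := by
  rw [densMeasure, withDensity_apply _ hs,
    setLIntegral_congr_fun hs fun x hx => ENNReal.ofReal_of_nonpos (hf x hx), lintegral_zero]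

theorem ofReal_mul_densMeasure_Iic_le {g : ℝ → ℝ}
    (hg : ConcaveOn ℝ {x | 0 < g x} fun x => Real.log (g x))
    {a b : ℝ} (hab : a ≤ b) (ha : 0 < g a) (hb : 0 < g b) :
    ENNReal.ofReal (g b) * densMeasure g (Iic a) ≤
      ENNReal.ofReal (g a) * densMeasure g (Iic b) := by
  have hshift : densMeasure g (Iic b) = ∫⁻ t in Iic a, ENNReal.ofReal (g (t + (b - a))) := by
    rw [densMeasure, withDensity_apply _ measurableSet_Iic,
      ← (measurePreserving_add_right volume (b - a)).setLIntegral_comp_preimage_emb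
        (measurableEmbedding_addRight (b - a)), preimage_add_const_Iic, sub_sub_cancel]
  rw [hshift, densMeasure, withDensity_apply _ measurableSet_Iic,
    ← lintegral_const_mul' _ _ ENNReal.ofReal_ne_top,
    ← lintegral_const_mul' _ _ ENNReal.ofReal_ne_top]
  refine setLIntegral_mono' measurableSet_Iic fun t ht => ?_
  rcases le_or_gt (g t) 0 with h | h
  · simp [ENNReal.ofReal_of_nonpos h]
  rw [← ENNReal.ofReal_mul hb.le, ← ENNReal.ofReal_mul ha.le, mul_comm, ← add_sub_assoc]
  exact ENNReal.ofReal_le_ofReal (mul_le_mul_of_concaveOn_log hg h hb ht hab)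

theorem ofReal_mul_densMeasure_Ioi_le {g : ℝ → ℝ}
    (hg : ConcaveOn ℝ {x | 0 < g x} fun x => Real.log (g x))
    {a b : ℝ} (hab : a ≤ b) (ha : 0 < g a) (hb : 0 < g b) :
    ENNReal.ofReal (g a) * densMeasure g (Ioi b) ≤
      ENNReal.ofReal (g b) * densMeasure g (Ioi a) := by
  have hshift : densMeasure g (Ioi a) = ∫⁻ t in Ioi b, ENNReal.ofReal (g (t + (a - b))) := by
    rw [densMeasure, withDensity_apply _ measurableSet_Ioi,
      ← (measurePreserving_add_right volume (a - b)).setLIntegral_comp_preimage_emb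
        (measurableEmbedding_addRight (a - b)), preimage_add_const_Ioi, sub_sub_cancel]
  rw [hshift, densMeasure, withDensity_apply _ measurableSet_Ioi,
    ← lintegral_const_mul' _ _ ENNReal.ofReal_ne_top,
    ← lintegral_const_mul' _ _ ENNReal.ofReal_ne_top]
  refine setLIntegral_mono' measurableSet_Ioi fun t ht => ?_
  rcases le_or_gt (g t) 0 with h | h
  · simp [ENNReal.ofReal_of_nonpos h]
  rw [← ENNReal.ofReal_mul ha.le, ← ENNReal.ofReal_mul hb.le,
    show t + (a - b) = a + t - b by ring]
  exact ENNReal.ofReal_le_ofReal (mul_le_mul_of_concaveOn_log hg ha h hab (le_of_lt ht))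

namespace LogConcaveSetup

variable (S : LogConcaveSetup)

instance : IsProbabilityMeasure (densMeasure S.f) := S.hprob

theorem densMeasure_Iic_Finv {r : ℝ} (hr : r ∈ Ioo (0 : ℝ) 1) :
    densMeasure S.f (Iic (S.Finv r)) = ENNReal.ofReal r := by
  rw [← ENNReal.ofReal_toReal (measure_ne_top (densMeasure S.f) _), S.hFinv r hr]

theorem densMeasure_Ioi_Finv {r : ℝ} (hr : r ∈ Ioo (0 : ℝ) 1) :
    densMeasure S.f (Ioi (S.Finv r)) = ENNReal.ofReal (1 - r) := by
  rw [← compl_Iic, prob_compl_eq_one_sub measurableSet_Iic, S.densMeasure_Iic_Finv hr,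
    ENNReal.ofReal_sub _ hr.1.le, ENNReal.ofReal_one]

theorem monotoneOn_Finv : MonotoneOn S.Finv (Ioo 0 1) := by
  intro s hs r hr hsr
  by_contra! h
  have := ENNReal.toReal_mono (measure_ne_top _ _)
    (measure_mono (μ := densMeasure S.f) (Iic_subset_Iic.2 h.le))
  rw [S.hFinv r hr, S.hFinv s hs] at this
  exact absurd (le_antisymm hsr this) (by rintro rfl; exact lt_irrefl _ h)

theorem f_Finv_pos {r : ℝ} (hr : r ∈ Ioo (0 : ℝ) 1) : 0 < S.f (S.Finv r) := by
  set t := S.Finv r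
  by_contra! ht
  -- The support of `f` is the interval `(-b₀, b₀)`, so `f` vanishes on one side of `t`.
  have hvanish : ∀ x, |t| ≤ |x| → S.f x ≤ 0 := fun x hx => by
    contrapose! ht
    rw [S.hf_pos] at ht ⊢
    exact (ENNReal.ofReal_le_ofReal hx).trans_lt ht
  rcases le_or_gt 0 t with h0 | h0
  · have h := densMeasure_eq_zero_of_nonpos measurableSet_Ioi fun x (hx : t < x) =>
      hvanish x (abs_le_abs_of_nonneg h0 hx.le)
    rw [S.densMeasure_Ioi_Finv hr, ENNReal.ofReal_eq_zero] at h
    linarith [hr.2]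
  · have h := densMeasure_eq_zero_of_nonpos measurableSet_Iic fun x (hx : x ≤ t) =>
      hvanish x (abs_le_abs_of_nonpos h0.le hx)
    rw [S.densMeasure_Iic_Finv hr, ENNReal.ofReal_eq_zero] at h
    linarith [hr.1]

theorem J_pos {r : ℝ} (hr : r ∈ Ioo (0 : ℝ) 1) : 0 < S.J r :=
  S.hJ r hr ▸ S.f_Finv_pos hr

theorem antitoneOn_J_div : AntitoneOn (fun r => S.J r / r) (Ioo 0 1) := by
  intro s hs r hr hsr
  have hfs := S.f_Finv_pos hs
  have hfr := S.f_Finv_pos hr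
  have h := ofReal_mul_densMeasure_Iic_le S.hf_logConcave (S.monotoneOn_Finv hs hr hsr) hfs hfr
  rw [S.densMeasure_Iic_Finv hs, S.densMeasure_Iic_Finv hr, ← ENNReal.ofReal_mul hfr.le,
    ← ENNReal.ofReal_mul hfs.le, ENNReal.ofReal_le_ofReal_iff (by nlinarith [hr.1])] at h
  rw [div_le_div_iff₀ hr.1 hs.1, S.hJ r hr, S.hJ s hs]
  exact h

theorem monotoneOn_J_div_one_sub : MonotoneOn (fun r => S.J r / (1 - r)) (Ioo 0 1) := by
  intro r hr s hs hrs
  have hfr := S.f_Finv_pos hr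
  have hfs := S.f_Finv_pos hs
  have h := ofReal_mul_densMeasure_Ioi_le S.hf_logConcave (S.monotoneOn_Finv hr hs hrs) hfr hfs
  rw [S.densMeasure_Ioi_Finv hr, S.densMeasure_Ioi_Finv hs, ← ENNReal.ofReal_mul hfr.le,
    ← ENNReal.ofReal_mul hfs.le,
    ENNReal.ofReal_le_ofReal_iff (mul_nonneg hfs.le (by linarith [hr.2]))] at h
  rw [div_le_div_iff₀ (by linarith [hr.2]) (by linarith [hs.2]), S.hJ r hr, S.hJ s hs]
  exact h

theorem J_div_mul_le_of_le {s r : ℝ} (hs : s ∈ Ioo (0 : ℝ) 1) (hr : r ∈ Ioo (0 : ℝ) 1)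
    (hsr : s ≤ r) : S.J r / r * s ≤ S.J s :=
  (le_div_iff₀ hs.1).mp (S.antitoneOn_J_div hs hr hsr)

theorem J_div_one_sub_mul_le_of_le {r s : ℝ} (hr : r ∈ Ioo (0 : ℝ) 1) (hs : s ∈ Ioo (0 : ℝ) 1)
    (hrs : r ≤ s) : S.J r / (1 - r) * (1 - s) ≤ S.J s :=
  (le_div_iff₀ (sub_pos.2 hs.2)).mp (S.monotoneOn_J_div_one_sub hr hs hrs)

end LogConcaveSetup

/-- For all `0 < x ≤ 1/2` and `0 < y ≤ min (2x) (1-x)`, one has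
`K_μ(x, y) ≥ L_μ(x, y) ≥ 0`. -/
theorem Kfun_ge_Lfun (S : LogConcaveSetup) (x y : ℝ)
    (hx0 : 0 < x) (hx : x ≤ 1 / 2)
    (hy0 : 0 < y) (hy : y ≤ min (2 * x) (1 - x)) :
    Lfun S.J x y ≤ Kfun S.J x y ∧ 0 ≤ Lfun S.J x y := by
  obtain ⟨hy2x, hy1x⟩ := le_min_iff.mp hy
  have hx1 : x ∈ Ioo (0 : ℝ) 1 := ⟨hx0, by linarith⟩
  have hy2 : y / 2 ∈ Ioo (0 : ℝ) 1 := ⟨by linarith, by linarith⟩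
  have hJx := (S.J_pos hx1).le
  unfold Kfun Lfun
  split_ifs with hyx
  · have hJ := div_mul_cancel₀ (S.J x) hx0.ne'
    have h₁ := S.J_div_mul_le_of_le (s := x - y / 2) ⟨by linarith, by linarith⟩ hx1 (by linarith)
    have h₂ := S.J_div_mul_le_of_le hy2 hx1 (by linarith)
    rw [show y / (2 * x) * S.J x = S.J x / x * (y / 2) by ring]
    constructor <;> linarith
  · have hJ := div_mul_cancel₀ (S.J x) (sub_pos.2 hx1.2).ne'
    have h₁ := S.J_div_one_sub_mul_le_of_le hx1 (s := x + y / 2) ⟨by linarith, by linarith⟩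
      (by linarith)
    rw [show y / (2 * (1 - x)) * S.J x = S.J x / (1 - x) * (y / 2) by
      rw [mul_comm 2, ← div_div]; ring]
    refine ⟨by linarith, ?_⟩
    have hdiv : S.J x / (1 - x) ≤ S.J x / x := div_le_div_of_nonneg_left hJx hx0 (by linarith)
    rcases le_or_gt (y / 2) x with h | h
    · have := S.J_div_mul_le_of_le hy2 hx1 h
      nlinarith
    · have := S.J_div_one_sub_mul_le_of_le hx1 hy2 h.le
      nlinarith [div_nonneg hJx (by linarith : 0 ≤ 1 - x)]
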